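/- arXiv:1901.01258 — 15 statements merged into one kernel-verified Lean document; each statement's English description precedes it below -/
import Mathlib

section
/- Let A = (a_n(i)) be a G∞-matrix. Then the following are equivalent: (I) there exists n with lim_{i→∞} a_n(i) = ∞; (S) for every n there exists m > n with lim_{i→∞} a_n(i)/a_m(i) = 0. -/
open Filter

/-- `a` is a G∞-matrix: (K) increasing in `n`, (G∞-1) entries at least 1 and increasing in `i`,
(G∞-2) for every `n` there are `m > n` and `M > 0` with `a n i ^ 2 ≤ M * a m i` for all `i`.
Indices range over positive integers. -/
def IsGinfMatrix (a : ℕ → ℕ → ℝ) : Prop :=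
  (∀ n i, 0 < n → 0 < i → a n i ≤ a (n + 1) i) ∧
  (∀ n i, 0 < n → 0 < i → 1 ≤ a n i ∧ a n i ≤ a n (i + 1)) ∧
  (∀ n, 0 < n → ∃ m, n < m ∧ ∃ M : ℝ, 0 < M ∧ ∀ i, 0 < i → (a n i) ^ 2 ≤ M * a m i)

/-- For a G∞-matrix, condition (I) is equivalent to condition (S). -/
theorem stmt_0 (a : ℕ → ℕ → ℝ) (hA : IsGinfMatrix a) :
    (∃ n, 0 < n ∧ Tendsto (fun i => a n i) atTop atTop) ↔
      (∀ n, 0 < n → ∃ m, n < m ∧ Tendsto (fun i => a n i / a m i) atTop (nhds 0)) := by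
  obtain ⟨hK, h1, h2⟩ := hA
  have hmono : ∀ n m i, 0 < n → n ≤ m → 0 < i → a n i ≤ a m i := by
    intro n m i hn hnm hi
    induction m with
    | zero => omega
    | succ m ih =>
      rcases Nat.lt_or_ge n (m + 1) with h | h
      · have hnm' : n ≤ m := Nat.lt_succ_iff.mp h
        exact (ih hnm').trans (hK m i (lt_of_lt_of_le hn hnm') hi)
      · have : n = m + 1 := le_antisymm hnm h
        rw [this]
  constructor
  · rintro ⟨n₀, hn₀, hlim⟩ n hn
    set N := max n n₀ with hNdef
    have hN : 0 < N := lt_of_lt_of_le hn (le_max_left _ _)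
    obtain ⟨m, hNm, M, hM, hle⟩ := h2 N hN
    refine ⟨m, lt_of_le_of_lt (le_max_left n n₀) hNm, ?_⟩
    have hAN : Tendsto (fun i => a N i) atTop atTop := by
      refine tendsto_atTop_mono' atTop ?_ hlim
      filter_upwards [eventually_ge_atTop 1] with i hi
      exact hmono n₀ N i hn₀ (le_max_right _ _) hi
    have hlim2 : Tendsto (fun i => M / a N i) atTop (nhds 0) := hAN.const_div_atTop M
    refine squeeze_zero' ?_ ?_ hlim2
    · filter_upwards [eventually_ge_atTop 1] with i hi
      have h0 : (0:ℝ) < 1 := one_pos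
      exact div_nonneg (le_trans zero_le_one (h1 n i hn hi).1)
        (le_trans zero_le_one (h1 m i (lt_trans hN hNm) hi).1)
    · filter_upwards [eventually_ge_atTop 1] with i hi
      have hm0 : 0 < m := lt_trans hN hNm
      have hami : (0:ℝ) < a m i := lt_of_lt_of_le one_pos (h1 m i hm0 hi).1
      have haNi : (0:ℝ) < a N i := lt_of_lt_of_le one_pos (h1 N i hN hi).1
      have step1 : a n i / a m i ≤ a N i / a m i := by
        gcongr
        exact hmono n N i hn (le_max_left _ _) hi
      have step2 : a N i / a m i ≤ M / a N i := by
        rw [div_le_div_iff₀ hami haNi]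
        have := hle i hi
        nlinarith [this]
      exact step1.trans step2
  · intro hS
    obtain ⟨m, hm, hlim⟩ := hS 1 one_pos
    have hm0 : 0 < m := lt_trans one_pos hm
    refine ⟨m, hm0, ?_⟩
    have hinv : Tendsto (fun i => (a m i)⁻¹) atTop (nhdsWithin 0 (Set.Ioi 0)) := by
      rw [tendsto_nhdsWithin_iff]
      constructor
      · refine squeeze_zero' ?_ ?_ hlim
        · filter_upwards [eventually_ge_atTop 1] with i hi
          exact inv_nonneg.mpr (le_trans zero_le_one (h1 m i hm0 hi).1)
        · filter_upwards [eventually_ge_atTop 1] with i hi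
          have hami : (0:ℝ) < a m i := lt_of_lt_of_le one_pos (h1 m i hm0 hi).1
          rw [inv_eq_one_div]
          gcongr
          exact (h1 1 i one_pos hi).1
      · filter_upwards [eventually_ge_atTop 1] with i hi
        exact Set.mem_Ioi.mpr (inv_pos.mpr (lt_of_lt_of_le one_pos (h1 m i hm0 hi).1))
    have h := hinv.inv_tendsto_nhdsGT_zero
    have : (fun i => (a m i)⁻¹)⁻¹ = fun i => a m i := by
      funext i; simp
    rwa [this] at h
end

section
/- Let A = (a_n(i)) be a G∞-matrix. Then the following are equivalent: (GPC) for every n there exists m > n with ∑_{i=1}^∞ a_n(i)/a_m(i) < ∞; (SV) there exists n with ∑_{i=1}^∞ v_n(i) < ∞. -/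
open Filter

private lemma mono_n (a : ℕ → ℕ → ℝ) (hA : IsGinfMatrix a) {n n' i : ℕ}
    (hn : 0 < n) (hnn' : n ≤ n') (hi : 0 < i) : a n i ≤ a n' i := by
  induction n' with
  | zero => omega
  | succ k ih =>
    rcases Nat.lt_or_ge n (k + 1) with h | h
    · exact (ih (by omega)).trans (hA.1 k i (by omega) hi)
    · have : n = k + 1 := by omega
      simp [this]

/-- For a G∞-matrix, condition (GPC) is equivalent to condition (SV), where
`v n i = (a n i)⁻¹` and the sums run over the positive integers `i`. -/
theorem stmt_1 (a : ℕ → ℕ → ℝ) (hA : IsGinfMatrix a) :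
    (∀ n, 0 < n → ∃ m, n < m ∧ Summable (fun i : ℕ => a n (i + 1) / a m (i + 1))) ↔
      (∃ n, 0 < n ∧ Summable (fun i : ℕ => (a n (i + 1))⁻¹)) := by
  have hpos : ∀ n i, 0 < n → 0 < i → 0 < a n i := fun n i hn hi =>
    lt_of_lt_of_le one_pos (hA.2.1 n i hn hi).1
  constructor
  · intro h
    obtain ⟨m, hm, hsum⟩ := h 1 one_pos
    refine ⟨m, by omega, hsum.of_nonneg_of_le (fun i => ?_) (fun i => ?_)⟩
    · have := hpos m (i + 1) (by omega) (by omega)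
      positivity
    rw [inv_eq_one_div]
    gcongr
    · exact (hpos m (i + 1) (by omega) (by omega)).le
    · exact (hA.2.1 1 (i + 1) one_pos (by omega)).1
  · rintro ⟨n₀, hn₀, hsum⟩
    intro n hn
    set n' := max n n₀ with hn'
    obtain ⟨m, hm, M, hM, hbound⟩ := hA.2.2 n' (by omega)
    refine ⟨m, by omega, (hsum.mul_left M).of_nonneg_of_le (fun i => ?_) (fun i => ?_)⟩
    · have h1 := hpos n (i + 1) hn (by omega)
      have h2 := hpos m (i + 1) (by omega) (by omega)
      positivity
    · have hi : (0:ℕ) < i + 1 := by omega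
      have h1 := hpos n' (i + 1) (by omega) hi
      have h2 := hpos m (i + 1) (by omega) hi
      have h0 := hpos n₀ (i + 1) hn₀ hi
      calc a n (i + 1) / a m (i + 1) ≤ a n' (i + 1) / a m (i + 1) := by
            gcongr
            exact mono_n a hA hn (le_max_left _ _) hi
        _ ≤ M / a n' (i + 1) := by
            rw [div_le_div_iff₀ h2 h1]
            have := hbound (i + 1) hi
            nlinarith
        _ ≤ M * (a n₀ (i + 1))⁻¹ := by
            rw [div_eq_mul_inv]
            gcongr
            exact mono_n a hA hn₀ (le_max_right _ _) hi
end

section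
/- Define a_n(i) := exp(i·n·e^{i·n}) for positive integers n,i. Then: (a) A = (a_n(i)) is a G∞-matrix; (b) A satisfies (GPC), i.e. for every n there exists m > n with ∑_{i=1}^∞ a_n(i)/a_m(i) < ∞ (so λ₁(A) is nuclear); (c) for all n,i one has a_n(i)² ≤ a_{2n}(i)·a_1(i) (the (DN)-type inequality with dominating index 1). -/
open Filter

/-- The matrix of Example `a_n(i) = exp(i n e^{i n})`. -/
noncomputable def aEx (n i : ℕ) : ℝ := Real.exp ((i : ℝ) * n * Real.exp ((i : ℝ) * n))

lemma xex_mono {x y : ℝ} (hx : 0 ≤ x) (hxy : x ≤ y) :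
    x * Real.exp x ≤ y * Real.exp y :=
  mul_le_mul hxy (Real.exp_le_exp.2 hxy) (Real.exp_pos x).le (hx.trans hxy)

lemma key_bound (n i : ℕ) (hn : 0 < n) (hi : 0 < i) :
    (i : ℝ) * n * Real.exp ((i : ℝ) * n) - (i : ℝ) * (n + 1) * Real.exp ((i : ℝ) * (n + 1))
      ≤ -(i : ℝ) := by
  have hi1 : (1 : ℝ) ≤ i := by exact_mod_cast hi
  have hn1 : (1 : ℝ) ≤ n := by exact_mod_cast hn
  have h1 : Real.exp ((i : ℝ) * n) ≤ Real.exp ((i : ℝ) * (n + 1)) := by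
    apply Real.exp_le_exp.2; nlinarith
  have h2 : (1 : ℝ) ≤ Real.exp ((i : ℝ) * (n + 1)) :=
    Real.one_le_exp (by nlinarith)
  nlinarith [mul_nonneg (mul_nonneg (by linarith : (0:ℝ) ≤ (i:ℝ)) (by linarith : (0:ℝ) ≤ (n:ℝ)))
      (sub_nonneg.2 h1),
    mul_nonneg (by linarith : (0:ℝ) ≤ (i:ℝ)) (sub_nonneg.2 h2)]

lemma sq_step (n i : ℕ) (hn : 0 < n) (hi : 0 < i) :
    (aEx n i) ^ 2 ≤ aEx (n + 1) i := by
  have hi1 : (1 : ℝ) ≤ i := by exact_mod_cast hi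
  have hn1 : (1 : ℝ) ≤ n := by exact_mod_cast hn
  unfold aEx
  rw [sq, ← Real.exp_add]
  apply Real.exp_le_exp.2
  have hsplit : (i : ℝ) * ((n : ℝ) + 1) = (i : ℝ) * n + i := by ring
  push_cast
  rw [hsplit, Real.exp_add]
  have h2 : (2 : ℝ) ≤ Real.exp (i : ℝ) := by
    have := Real.add_one_le_exp (i : ℝ); linarith
  have hE : (0 : ℝ) < Real.exp ((i : ℝ) * n) := Real.exp_pos _
  nlinarith [mul_nonneg (mul_nonneg (by nlinarith : (0:ℝ) ≤ (i:ℝ)*n + i) hE.le)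
      (by linarith : (0:ℝ) ≤ Real.exp (i:ℝ) - 2),
    mul_nonneg (by linarith : (0:ℝ) ≤ (i:ℝ)) hE.le]

/-- `a_n(i) = exp(i n e^{i n})` defines a G∞-matrix which satisfies (GPC) (so `λ₁(A)` is
nuclear) and the (DN)-type inequality `a_n(i)² ≤ a_{2n}(i)·a_1(i)`. -/
theorem stmt_2 :
    IsGinfMatrix aEx ∧
      (∀ n, 0 < n → ∃ m, n < m ∧ Summable (fun i : ℕ => aEx n (i + 1) / aEx m (i + 1))) ∧
      (∀ n i, 0 < n → 0 < i → (aEx n i) ^ 2 ≤ aEx (2 * n) i * aEx 1 i) := by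
  refine ⟨⟨?_, ?_, ?_⟩, ?_, ?_⟩
  · -- (K)
    intro n i hn hi
    unfold aEx
    apply Real.exp_le_exp.2
    apply xex_mono (by positivity)
    have : (0:ℝ) ≤ (i:ℝ) := Nat.cast_nonneg i
    push_cast; nlinarith
  · -- (G∞-1)
    intro n i hn hi
    refine ⟨Real.one_le_exp (by positivity), ?_⟩
    unfold aEx
    apply Real.exp_le_exp.2
    apply xex_mono (by positivity)
    have : (0:ℝ) ≤ (n:ℝ) := Nat.cast_nonneg n
    push_cast; nlinarith
  · -- (G∞-2)
    intro n hn
    exact ⟨n + 1, Nat.lt_succ_self n, 1, one_pos,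
      fun i hi => by rw [one_mul]; exact sq_step n i hn hi⟩
  · -- (GPC)
    intro n hn
    refine ⟨n + 1, Nat.lt_succ_self n, ?_⟩
    have hsum : Summable (fun i : ℕ => Real.exp (-((i : ℝ) + 1))) := by
      have h : Summable (fun i : ℕ => Real.exp (-1) * (Real.exp (-1)) ^ i) :=
        (summable_geometric_of_lt_one (Real.exp_pos _).le
          (Real.exp_lt_one_iff.2 (by norm_num))).mul_left _
      refine h.congr fun i => ?_
      rw [← Real.exp_nat_mul, ← Real.exp_add]
      ring_nf
    apply Summable.of_nonneg_of_le (fun i => by unfold aEx; positivity) _ hsum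
    intro i
    unfold aEx
    rw [div_eq_mul_inv, ← Real.exp_neg, ← Real.exp_add]
    apply Real.exp_le_exp.2
    have := key_bound n (i + 1) hn (Nat.succ_pos i)
    push_cast at this ⊢
    linarith
  · -- (DN)
    intro n i hn hi
    unfold aEx
    rw [sq, ← Real.exp_add, ← Real.exp_add]
    apply Real.exp_le_exp.2
    have h1 : Real.exp ((i : ℝ) * n) ≤ Real.exp ((i : ℝ) * (2 * n)) := by
      apply Real.exp_le_exp.2
      have : (0:ℝ) ≤ (i:ℝ) * n := by positivity
      nlinarith
    have h2 : (0:ℝ) ≤ (i : ℝ) * 1 * Real.exp ((i : ℝ) * 1) := by positivity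
    push_cast at h1 h2 ⊢
    nlinarith [mul_nonneg (mul_nonneg (Nat.cast_nonneg (α := ℝ) i) (Nat.cast_nonneg (α := ℝ) n))
      (sub_nonneg.2 h1)]
end

section
/- Let A = (a_n(i)) be a matrix of reals with a_n(i) ≤ a_{n+1}(i) for all n,i, satisfying (G∞-1): 1 ≤ a_n(i) ≤ a_n(i+1) for all n,i, and condition (S): for every n there exists m > n with lim_{i→∞} a_n(i)/a_m(i) = 0. Then for every n there exists m > n such that sup_{i} (v_m(i)/i)·∑_{j=1}^{i} 1/v_n(j) < ∞. (This is the criterion guaranteeing that the Cesàro operator 𝖢 is continuous on the co-echelon space k₀(V).) -/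
open Filter

/-- Condition (S)+(K)+(G∞-1) imply the continuity criterion for the Cesàro operator on `k₀(V)`:
for every `n` there is `m > n` with `sup_i (v_m(i)/i)·∑_{j=1}^i 1/v_n(j) < ∞`,
where `v n i = (a n i)⁻¹`, so `1 / v n j = a n j`. -/
theorem stmt_3 (a : ℕ → ℕ → ℝ)
    (hK : ∀ n i, 0 < n → 0 < i → a n i ≤ a (n + 1) i)
    (hG1 : ∀ n i, 0 < n → 0 < i → 1 ≤ a n i ∧ a n i ≤ a n (i + 1))
    (hS : ∀ n, 0 < n → ∃ m, n < m ∧ Tendsto (fun i => a n i / a m i) atTop (nhds 0)) :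
    ∀ n, 0 < n → ∃ m, n < m ∧ ∃ C : ℝ, ∀ i, 0 < i →
      (a m i)⁻¹ / (i : ℝ) * ∑ j ∈ Finset.Icc 1 i, a n j ≤ C := by
  intro n hn
  obtain ⟨m, hnm, hlim⟩ := hS n hn
  have hm : 0 < m := hn.trans hnm
  obtain ⟨C, hC⟩ := hlim.bddAbove_range
  refine ⟨m, hnm, C, ?_⟩
  intro i hi
  have hmono : ∀ j k, 1 ≤ j → j ≤ k → a n j ≤ a n k := by
    intro j k hj hjk
    induction k, hjk using Nat.le_induction with
    | base => exact le_rfl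
    | succ k hk ih => exact ih.trans (hG1 n k hn (hj.trans hk)).2
  have hsum : ∑ j ∈ Finset.Icc 1 i, a n j ≤ (i : ℝ) * a n i := by
    calc ∑ j ∈ Finset.Icc 1 i, a n j
        ≤ ∑ _j ∈ Finset.Icc 1 i, a n i :=
          Finset.sum_le_sum fun j hj =>
            hmono j i (Finset.mem_Icc.mp hj).1 (Finset.mem_Icc.mp hj).2
      _ = (i : ℝ) * a n i := by
          rw [Finset.sum_const, Nat.card_Icc]; simp
  have ham : (0 : ℝ) < a m i := lt_of_lt_of_le one_pos (hG1 m i hm hi).1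
  have hipos : (0 : ℝ) < (i : ℝ) := by exact_mod_cast hi
  calc (a m i)⁻¹ / (i : ℝ) * ∑ j ∈ Finset.Icc 1 i, a n j
      ≤ (a m i)⁻¹ / (i : ℝ) * ((i : ℝ) * a n i) := by
        apply mul_le_mul_of_nonneg_left hsum (by positivity)
    _ = a n i / a m i := by field_simp
    _ ≤ C := hC (Set.mem_range_self i)
end

section
/- Let A = (a_n(i)) be a G∞-matrix. Then the following are equivalent: (GPC) for every n there exists m > n with ∑_{i=1}^∞ a_n(i)/a_m(i) < ∞; (N) for every n there exists m > n with sup_i i·v_m(i)/v_n(i) < ∞; (SN) for every real α and every n there exists m > n with sup_i i^α·v_m(i)/v_n(i) < ∞. -/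
open Filter

section aux

variable {a : ℕ → ℕ → ℝ}

lemma ginf_one_le (hA : IsGinfMatrix a) {n i : ℕ} (hn : 0 < n) (hi : 0 < i) :
    1 ≤ a n i := (hA.2.1 n i hn hi).1

lemma ginf_pos (hA : IsGinfMatrix a) {n i : ℕ} (hn : 0 < n) (hi : 0 < i) :
    0 < a n i := lt_of_lt_of_le one_pos (ginf_one_le hA hn hi)

lemma ginf_mono_n (hA : IsGinfMatrix a) {n m i : ℕ} (hn : 0 < n) (hi : 0 < i)
    (hnm : n ≤ m) : a n i ≤ a m i := by
  induction m, hnm using Nat.le_induction with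
  | base => exact le_refl _
  | succ m hm ih => exact ih.trans (hA.1 m i (hn.trans_le hm) hi)

lemma ginf_mono_i (hA : IsGinfMatrix a) {n i j : ℕ} (hn : 0 < n) (hi : 0 < i)
    (hij : i ≤ j) : a n i ≤ a n j := by
  induction j, hij using Nat.le_induction with
  | base => exact le_refl _
  | succ j hj ih => exact ih.trans (hA.2.1 n j hn (hi.trans_le hj)).2

end aux

/-- For a G∞-matrix, (GPC), (N) and (SN) are equivalent, where `v n i = (a n i)⁻¹`. -/
theorem stmt_5 (a : ℕ → ℕ → ℝ) (hA : IsGinfMatrix a) :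
    List.TFAE
      [∀ n, 0 < n → ∃ m, n < m ∧ Summable (fun i : ℕ => a n (i + 1) / a m (i + 1)),
       ∀ n, 0 < n → ∃ m, n < m ∧ ∃ C : ℝ, ∀ i : ℕ, 0 < i →
         (i : ℝ) * (a m i)⁻¹ / (a n i)⁻¹ ≤ C,
       ∀ α : ℝ, ∀ n, 0 < n → ∃ m, n < m ∧ ∃ C : ℝ, ∀ i : ℕ, 0 < i →
         (i : ℝ) ^ α * (a m i)⁻¹ / (a n i)⁻¹ ≤ C] := by
  tfae_have 1 → 2 := by
    intro h1 n hn
    obtain ⟨m, hnm, hs⟩ := h1 n hn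
    have hm : 0 < m := hn.trans hnm
    obtain ⟨m', hmm', M, hM, hsq⟩ := hA.2.2 m hm
    have hm' : 0 < m' := hm.trans hmm'
    have term_nonneg : ∀ j : ℕ, 0 ≤ a n (j + 1) / a m (j + 1) := fun j =>
      div_nonneg (ginf_pos hA hn j.succ_pos).le (ginf_pos hA hm j.succ_pos).le
    set S := ∑' j : ℕ, a n (j + 1) / a m (j + 1) with hS
    have hS0 : 0 ≤ S := tsum_nonneg term_nonneg
    refine ⟨m', hnm.trans hmm', M * S * S, fun i hi => ?_⟩
    have hx : 0 < a n i := ginf_pos hA hn hi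
    have hy : 0 < a m i := ginf_pos hA hm hi
    have hz : 0 < a m' i := ginf_pos hA hm' hi
    -- the single term bound : a n i / a m i ≤ S
    have ht : a n i / a m i ≤ S := by
      have := Summable.le_tsum hs (i - 1) (fun j _ => term_nonneg j)
      rwa [Nat.sub_add_cancel hi] at this
    have ht' : a n i ≤ S * a m i := by
      rw [div_le_iff₀ hy] at ht; linarith
    -- the bound i ≤ S * a m i
    have hI : (i : ℝ) ≤ S * a m i := by
      have hsum : ∑ j ∈ Finset.range i, (a m i)⁻¹ ≤ S := by
        refine le_trans (Finset.sum_le_sum (fun j hj => ?_))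
          (Summable.sum_le_tsum (Finset.range i) (fun j _ => term_nonneg j) hs)
        have hji : j + 1 ≤ i := Finset.mem_range.mp hj
        have h1 : (a m i)⁻¹ ≤ (a m (j + 1))⁻¹ :=
          inv_anti₀ (ginf_pos hA hm j.succ_pos) (ginf_mono_i hA hm j.succ_pos hji)
        have h2 : (a m (j + 1))⁻¹ ≤ a n (j + 1) * (a m (j + 1))⁻¹ :=
          le_mul_of_one_le_left (inv_nonneg.2 (ginf_pos hA hm j.succ_pos).le)
            (ginf_one_le hA hn j.succ_pos)
        rw [div_eq_mul_inv]
        exact h1.trans h2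
      rw [Finset.sum_const, Finset.card_range, nsmul_eq_mul] at hsum
      have : (i : ℝ) * (a m i)⁻¹ ≤ S := hsum
      calc (i : ℝ) = (i : ℝ) * (a m i)⁻¹ * a m i := by field_simp
        _ ≤ S * a m i := mul_le_mul_of_nonneg_right this hy.le
    have hsqi := hsq i hi
    have heq : (i : ℝ) * (a m' i)⁻¹ / (a n i)⁻¹ = (i : ℝ) * a n i / a m' i := by
      field_simp
    rw [heq, div_le_iff₀ hz]
    nlinarith [mul_le_mul hI ht' hx.le (by positivity : (0:ℝ) ≤ S * a m i),
      mul_le_mul_of_nonneg_left hsqi (by positivity : (0:ℝ) ≤ S * S)]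
  tfae_have 2 → 3 := by
    intro h2
    have key : ∀ k : ℕ, ∀ n, 0 < n → ∃ m, n < m ∧ ∃ C : ℝ, 0 ≤ C ∧
        ∀ i : ℕ, 0 < i → (i : ℝ) ^ k * a n i / a m i ≤ C := by
      intro k
      induction k with
      | zero =>
        intro n hn
        refine ⟨n + 1, lt_add_one n, 1, zero_le_one, fun i hi => ?_⟩
        rw [pow_zero, one_mul, div_le_one (ginf_pos hA (by omega : 0 < n+1) hi)]
        exact hA.1 n i hn hi
      | succ k ih =>
        intro n hn
        obtain ⟨m, hnm, C, hC0, hC⟩ := ih n hn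
        have hm : 0 < m := hn.trans hnm
        obtain ⟨m', hmm', C', hC'⟩ := h2 m hm
        have hm' : 0 < m' := hm.trans hmm'
        have hC'0 : 0 ≤ C' := by
          refine le_trans ?_ (hC' 1 one_pos)
          have h1 : 0 < a m' 1 := ginf_pos hA hm' one_pos
          have h2' : 0 < a m 1 := ginf_pos hA hm one_pos
          positivity
        refine ⟨m', hnm.trans hmm', C * C', mul_nonneg hC0 hC'0, fun i hi => ?_⟩
        have hx : 0 < a n i := ginf_pos hA hn hi
        have hy : 0 < a m i := ginf_pos hA hm hi
        have hz : 0 < a m' i := ginf_pos hA hm' hi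
        have hb : (i : ℝ) * a m i / a m' i ≤ C' := by
          have := hC' i hi
          have heq : (i : ℝ) * (a m' i)⁻¹ / (a m i)⁻¹ = (i : ℝ) * a m i / a m' i := by
            field_simp
          rwa [heq] at this
        have heq2 : (i : ℝ) ^ (k + 1) * a n i / a m' i
            = ((i : ℝ) ^ k * a n i / a m i) * ((i : ℝ) * a m i / a m' i) := by
          field_simp
          ring
        rw [heq2]
        exact mul_le_mul (hC i hi) hb
          (div_nonneg (mul_nonneg (Nat.cast_nonneg i) hy.le) hz.le) hC0
    intro α n hn
    obtain ⟨m, hnm, C, hC0, hC⟩ := key ⌈α⌉₊ n hn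
    have hm : 0 < m := hn.trans hnm
    refine ⟨m, hnm, C, fun i hi => ?_⟩
    have hi1 : (1 : ℝ) ≤ (i : ℝ) := by exact_mod_cast hi
    have hx : 0 < a n i := ginf_pos hA hn hi
    have hy : 0 < a m i := ginf_pos hA hm hi
    have hrp : (i : ℝ) ^ α ≤ (i : ℝ) ^ (⌈α⌉₊ : ℕ) := by
      rw [← Real.rpow_natCast]
      exact Real.rpow_le_rpow_of_exponent_le hi1 (Nat.le_ceil α)
    have heq : (i : ℝ) ^ α * (a m i)⁻¹ / (a n i)⁻¹ = (i : ℝ) ^ α * a n i / a m i := by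
      field_simp
    rw [heq]
    refine le_trans ((div_le_div_iff_of_pos_right hy).2 (mul_le_mul_of_nonneg_right hrp hx.le)) ?_
    exact hC i hi
  tfae_have 3 → 1 := by
    intro h3 n hn
    obtain ⟨m, hnm, C, hC⟩ := h3 2 n hn
    have hm : 0 < m := hn.trans hnm
    refine ⟨m, hnm, ?_⟩
    have term_nonneg : ∀ j : ℕ, 0 ≤ a n (j + 1) / a m (j + 1) := fun j =>
      div_nonneg (ginf_pos hA hn j.succ_pos).le (ginf_pos hA hm j.succ_pos).le
    have hsum : Summable (fun j : ℕ => C * (1 / ((j + 1 : ℕ) : ℝ) ^ 2)) := by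
      have h := (Real.summable_one_div_nat_pow (p := 2)).2 one_lt_two
      exact ((summable_nat_add_iff 1).2 h).mul_left C
    refine Summable.of_nonneg_of_le term_nonneg (fun j => ?_) hsum
    have hx : 0 < a n (j + 1) := ginf_pos hA hn j.succ_pos
    have hy : 0 < a m (j + 1) := ginf_pos hA hm j.succ_pos
    have hI : (0 : ℝ) < ((j + 1 : ℕ) : ℝ) := by exact_mod_cast j.succ_pos
    have h := hC (j + 1) j.succ_pos
    have heq : ((j + 1 : ℕ) : ℝ) ^ (2 : ℝ) * (a m (j + 1))⁻¹ / (a n (j + 1))⁻¹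
        = ((j + 1 : ℕ) : ℝ) ^ (2 : ℕ) * (a n (j + 1) / a m (j + 1)) := by
      rw [show ((j + 1 : ℕ) : ℝ) ^ (2 : ℝ) = ((j + 1 : ℕ) : ℝ) ^ (2 : ℕ) by
        rw [← Real.rpow_natCast]; norm_num]
      field_simp
    rw [heq] at h
    rw [mul_one_div, le_div_iff₀ (by positivity)]
    nlinarith [sq_nonneg (((j + 1 : ℕ) : ℝ))]
  tfae_finish
end

section
/- Let A = (a_n(i)) be a matrix of reals with a_n(i) ≤ a_{n+1}(i) for all n,i, satisfying (G∞-1): 1 ≤ a_n(i) ≤ a_n(i+1) for all n,i, condition (S): for every n there exists m > n with lim_{i→∞} a_n(i)/a_m(i) = 0, and condition (N): for every n there exists m > n with sup_i i·v_m(i)/v_n(i) < ∞. Then for every positive integer s there exists n with lim_{i→∞} i^s·v_n(i) = 0. (Consequently every 1/(s+1), s ∈ ℕ, is an eigenvalue of the Cesàro operator on k₀(V), i.e. Σ = σ_pt(𝖢; k₀(V)).) -/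
open Filter

/-- For a matrix satisfying (K), (G∞-1), (S) and (N), for every positive integer `s` there
is an `n` with `i^s·v_n(i) → 0`, where `v n i = (a n i)⁻¹`.  (Consequently
`Σ = σ_pt(𝖢; k₀(V))`.) -/
theorem stmt_7 (a : ℕ → ℕ → ℝ)
    (hK : ∀ n i, 0 < n → 0 < i → a n i ≤ a (n + 1) i)
    (hG1 : ∀ n i, 0 < n → 0 < i → 1 ≤ a n i ∧ a n i ≤ a n (i + 1))
    (hS : ∀ n, 0 < n → ∃ m, n < m ∧ Tendsto (fun i => a n i / a m i) atTop (nhds 0))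
    (hN : ∀ n, 0 < n → ∃ m, n < m ∧ ∃ C : ℝ, ∀ i : ℕ, 0 < i →
      (i : ℝ) * (a m i)⁻¹ / (a n i)⁻¹ ≤ C) :
    ∀ s : ℕ, 0 < s → ∃ n, 0 < n ∧
      Tendsto (fun i : ℕ => (i : ℝ) ^ s * (a n i)⁻¹) atTop (nhds 0) := by
  have key : ∀ s : ℕ, ∃ n, 0 < n ∧
      Tendsto (fun i : ℕ => (i : ℝ) ^ s * (a n i)⁻¹) atTop (nhds 0) := by
    intro s
    induction s with
    | zero =>
      obtain ⟨m, hm, hlim⟩ := hS 1 one_pos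
      have hm0 : 0 < m := lt_trans one_pos hm
      refine ⟨m, hm0, ?_⟩
      have h0 : ∀ᶠ i : ℕ in atTop, 0 ≤ (i : ℝ) ^ 0 * (a m i)⁻¹ := by
        filter_upwards [eventually_gt_atTop 0] with i hi
        have h1 := (hG1 m i hm0 hi).1
        positivity
      have h1 : ∀ᶠ i : ℕ in atTop,
          (i : ℝ) ^ 0 * (a m i)⁻¹ ≤ a 1 i / a m i := by
        filter_upwards [eventually_gt_atTop 0] with i hi
        have h1i := (hG1 1 i one_pos hi).1
        have hmi := (hG1 m i hm0 hi).1
        simp only [pow_zero, one_mul]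
        rw [div_eq_mul_inv]
        exact le_mul_of_one_le_left (by positivity) h1i
      exact squeeze_zero' h0 h1 hlim
    | succ s ih =>
      obtain ⟨n, hn, hlim⟩ := ih
      obtain ⟨m, hnm, C, hC⟩ := hN n hn
      have hm0 : 0 < m := lt_trans hn hnm
      refine ⟨m, hm0, ?_⟩
      have h0 : ∀ᶠ i : ℕ in atTop, 0 ≤ (i : ℝ) ^ (s + 1) * (a m i)⁻¹ := by
        filter_upwards [eventually_gt_atTop 0] with i hi
        have h1 := (hG1 m i hm0 hi).1
        positivity
      have h1 : ∀ᶠ i : ℕ in atTop,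
          (i : ℝ) ^ (s + 1) * (a m i)⁻¹ ≤ C * ((i : ℝ) ^ s * (a n i)⁻¹) := by
        filter_upwards [eventually_gt_atTop 0] with i hi
        have hni : (0:ℝ) < a n i := lt_of_lt_of_le one_pos (hG1 n i hn hi).1
        have hinv : (0:ℝ) < (a n i)⁻¹ := inv_pos.mpr hni
        have hCi := hC i hi
        have h2 : (i : ℝ) * (a m i)⁻¹ ≤ C * (a n i)⁻¹ :=
          (div_le_iff₀ hinv).mp hCi
        have h3 : (0:ℝ) ≤ (i : ℝ) ^ s := by positivity
        calc (i : ℝ) ^ (s + 1) * (a m i)⁻¹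
            = (i : ℝ) ^ s * ((i : ℝ) * (a m i)⁻¹) := by ring
          _ ≤ (i : ℝ) ^ s * (C * (a n i)⁻¹) := by
              exact mul_le_mul_of_nonneg_left h2 h3
          _ = C * ((i : ℝ) ^ s * (a n i)⁻¹) := by ring
      exact squeeze_zero' h0 h1 (by simpa using hlim.const_mul C)
  intro s _
  exact key s
end

section
/- Let A = (a_n(i)) be a matrix of reals with a_n(i) ≤ a_{n+1}(i) for all n,i, satisfying (G∞-1): 1 ≤ a_n(i) ≤ a_n(i+1) for all n,i, and condition (S): for every n there exists m > n with lim_{i→∞} a_n(i)/a_m(i) = 0. Fix a positive integer s. Then the following are equivalent: (1) there exist a complex sequence x ≠ 0 and an n with lim_{i→∞} v_n(i)·x_i = 0 and (x_1 + ⋯ + x_i)/i = x_i/(s+1) for all i (i.e. 1/(s+1) is an eigenvalue of the Cesàro operator 𝖢 on k₀(V)); (2) there exists n with lim_{i→∞} i^s·v_n(i) = 0. -/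
open Filter

lemma aux_nat (s i : ℕ) : (i+1) * i.choose s = (i+1).choose s * (i+1-s) := by
  rw [Nat.add_one_mul_choose_eq i s, Nat.choose_succ_right_eq (i+1) s]

lemma aux_id (s i : ℕ) : ((i:ℂ) + 1 - s) * ((i+1).choose s : ℂ) = ((i:ℂ) + 1) * (i.choose s : ℂ) := by
  rcases le_or_gt s (i+1) with h | h
  · have := aux_nat s i
    have h2 : ((i+1-s : ℕ) : ℂ) = (i:ℂ) + 1 - s := by push_cast [Nat.cast_sub h]; ring
    calc ((i:ℂ) + 1 - s) * ((i+1).choose s : ℂ) = (((i+1).choose s * (i+1-s) : ℕ) : ℂ) := by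
          push_cast [h2]; ring
      _ = ((i:ℂ)+1) * (i.choose s : ℂ) := by rw [← this]; push_cast; ring
  · have h1 : i.choose s = 0 := Nat.choose_eq_zero_of_lt (by omega)
    have h2 : (i+1).choose s = 0 := Nat.choose_eq_zero_of_lt h
    simp [h1, h2]

/-- For a matrix satisfying (K), (G∞-1) and (S), and a fixed positive integer `s`, the value
`1/(s+1)` is an eigenvalue of the Cesàro operator on `k₀(V)` (i.e. there is a nonzero
sequence `x` in `k₀(V)` with `𝖢x = x/(s+1)`) if and only if `i^s·v_n(i) → 0` for some `n`,
where `v n i = (a n i)⁻¹`. -/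
theorem stmt_9 (a : ℕ → ℕ → ℝ)
    (hK : ∀ n i, 0 < n → 0 < i → a n i ≤ a (n + 1) i)
    (hG1 : ∀ n i, 0 < n → 0 < i → 1 ≤ a n i ∧ a n i ≤ a n (i + 1))
    (hS : ∀ n, 0 < n → ∃ m, n < m ∧ Tendsto (fun i => a n i / a m i) atTop (nhds 0))
    (s : ℕ) (hs : 0 < s) :
    (∃ x : ℕ → ℂ, (∃ i, 0 < i ∧ x i ≠ 0) ∧
        (∃ n, 0 < n ∧
          Tendsto (fun i : ℕ => ((a n i : ℂ))⁻¹ * x i) atTop (nhds 0)) ∧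
        (∀ i : ℕ, 0 < i → (∑ j ∈ Finset.Icc 1 i, x j) / (i : ℂ) = x i / ((s : ℂ) + 1))) ↔
      (∃ n, 0 < n ∧
        Tendsto (fun i : ℕ => (i : ℝ) ^ s * (a n i)⁻¹) atTop (nhds 0)) := by
  have hs1 : ((s:ℂ) + 1) ≠ 0 := by
    have h0 : ((s+1:ℕ):ℂ) ≠ 0 := Nat.cast_ne_zero.mpr (Nat.succ_ne_zero s)
    push_cast at h0; exact h0
  constructor
  · rintro ⟨x, ⟨i0, hi0, hx0⟩, ⟨n, hn, hten⟩, heq⟩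
    -- derive the linear recurrence
    have hsum : ∀ i : ℕ, 0 < i → (∑ j ∈ Finset.Icc 1 i, x j) = (i:ℂ) * x i / ((s:ℂ) + 1) := by
      intro i hi
      have hi' : ((i:ℂ)) ≠ 0 := Nat.cast_ne_zero.mpr hi.ne'
      have := heq i hi
      field_simp at this ⊢
      linear_combination this
    have key : ∀ i : ℕ, 0 < i → ((i:ℂ) - s) * x (i+1) = (i:ℂ) * x i := by
      intro i hi
      have h1 := hsum i hi
      have h2 := hsum (i+1) (by omega)
      rw [Finset.sum_Icc_succ_top (by omega : 1 ≤ i + 1), h1] at h2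
      field_simp at h2
      push_cast at h2 ⊢
      linear_combination -h2
    have hx1 : x 1 = 0 := by
      have := heq 1 (by omega)
      simp at this
      field_simp at this
      have hsC : (s:ℂ) ≠ 0 := Nat.cast_ne_zero.mpr hs.ne'
      have h0 : (s:ℂ) * x 1 = 0 := by linear_combination this
      rcases mul_eq_zero.mp h0 with h | h
      · exact absurd h hsC
      · exact h
    -- closed form
    have hform : ∀ i : ℕ, x (i+1) = x (s+1) * (i.choose s : ℂ) := by
      intro i
      induction i with
      | zero => simp [hx1, Nat.choose_eq_zero_of_lt hs]
      | succ i ih =>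
        rcases eq_or_ne (i+1) s with h | h
        · subst h; simp
        · have h1 := key (i+1) (by omega)
          push_cast at h1
          rw [ih] at h1
          have hne : ((i:ℂ) + 1 - s) ≠ 0 := by
            intro h0
            have : ((i+1 : ℕ) : ℂ) = (s:ℂ) := by push_cast; linear_combination h0
            exact h (Nat.cast_injective this)
          have h2 : ((i:ℂ) + 1 - s) * x (i+1+1) =
              ((i:ℂ) + 1 - s) * (x (s+1) * ((i+1).choose s : ℂ)) := by
            rw [h1]
            linear_combination (-(x (s+1))) * aux_id s i
          exact mul_left_cancel₀ hne h2
    set c := x (s+1) with hc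
    have hcne : c ≠ 0 := by
      intro h0
      apply hx0
      obtain ⟨j, rfl⟩ : ∃ j, i0 = j + 1 := ⟨i0 - 1, by omega⟩
      rw [hform j, h0, zero_mul]
    refine ⟨n, hn, ?_⟩
    -- real version of the decay
    have hten' : Tendsto (fun i : ℕ => (a n i)⁻¹ * (((i-1).choose s : ℕ) : ℝ)) atTop (nhds 0) := by
      rw [tendsto_zero_iff_norm_tendsto_zero] at hten
      have h2 : Tendsto (fun i : ℕ => ‖c‖⁻¹ * ‖((a n i : ℂ))⁻¹ * x i‖) atTop (nhds 0) := by
        simpa using hten.const_mul (‖c‖⁻¹)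
      apply h2.congr'
      filter_upwards [eventually_ge_atTop 1] with i hi
      have hai : 1 ≤ a n i := (hG1 n i hn (by omega)).1
      have hc0 : ‖c‖ ≠ 0 := norm_ne_zero_iff.mpr hcne
      have hxi : x i = c * (((i-1).choose s : ℕ) : ℂ) := by
        obtain ⟨j, rfl⟩ : ∃ j, i = j + 1 := ⟨i - 1, by omega⟩
        simp [hform j]
      rw [hxi, norm_mul, norm_inv, norm_mul, Complex.norm_natCast, Complex.norm_real,
        Real.norm_eq_abs, abs_of_nonneg (by linarith)]
      have hane : a n i ≠ 0 := by linarith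
      have habs : ‖c‖ ≠ 0 := hc0
      field_simp
    have hmain : Tendsto (fun i : ℕ =>
        ((2:ℝ)^s * s.factorial) * ((a n i)⁻¹ * (((i-1).choose s : ℕ):ℝ))) atTop (nhds 0) := by
      simpa using hten'.const_mul ((2:ℝ)^s * s.factorial)
    apply tendsto_of_tendsto_of_tendsto_of_le_of_le' tendsto_const_nhds hmain
    · filter_upwards [eventually_ge_atTop 1] with i hi
      have hai : 1 ≤ a n i := (hG1 n i hn (by omega)).1
      positivity
    · filter_upwards [eventually_ge_atTop (2*s+1)] with i hi
      have hai : 1 ≤ a n i := (hG1 n i hn (by omega)).1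
      have hainv : 0 ≤ (a n i)⁻¹ := by positivity
      have hb : ((i:ℝ))^s ≤ 2^s * s.factorial * (((i-1).choose s : ℕ):ℝ) := by
        have h1 : (((i - s : ℕ):ℝ))^s ≤ (s.factorial : ℝ) * (((i-1).choose s : ℕ):ℝ) := by
          have hpl := Nat.pow_le_choose (α := ℝ) s (i-1)
          have hfac : (0:ℝ) < s.factorial := by positivity
          rw [div_le_iff₀ hfac] at hpl
          have hrw : i - 1 + 1 - s = i - s := by omega
          rw [hrw] at hpl
          push_cast at hpl ⊢
          linarith
        have hcast : (((i - s : ℕ)):ℝ) = (i:ℝ) - s := by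
          have hsi : s ≤ i := by omega
          push_cast [Nat.cast_sub hsi]; ring
        have hi' : 2*(s:ℝ)+1 ≤ (i:ℝ) := by exact_mod_cast hi
        have h2 : (i:ℝ) ≤ 2 * ((i:ℝ) - s) := by linarith
        calc (i:ℝ)^s ≤ (2*((i:ℝ)-s))^s := pow_le_pow_left₀ (by positivity) h2 s
          _ = 2^s * ((i:ℝ)-s)^s := by rw [mul_pow]
          _ ≤ 2^s * ((s.factorial : ℝ) * (((i-1).choose s : ℕ):ℝ)) := by
              rw [← hcast]
              exact mul_le_mul_of_nonneg_left h1 (by positivity)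
          _ = 2^s * s.factorial * (((i-1).choose s : ℕ):ℝ) := by ring
      calc (i:ℝ)^s * (a n i)⁻¹
          ≤ (2^s * s.factorial * (((i-1).choose s : ℕ):ℝ)) * (a n i)⁻¹ :=
            mul_le_mul_of_nonneg_right hb hainv
        _ = (2:ℝ)^s * s.factorial * ((a n i)⁻¹ * (((i-1).choose s : ℕ):ℝ)) := by ring
  · rintro ⟨n, hn, h⟩
    refine ⟨fun i => (((i-1).choose s : ℕ) : ℂ), ⟨s+1, by omega, by simp⟩, ⟨n, hn, ?_⟩, ?_⟩
    · have hre : Tendsto (fun i : ℕ => (a n i)⁻¹ * (((i-1).choose s : ℕ):ℝ)) atTop (nhds 0) := by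
        apply tendsto_of_tendsto_of_tendsto_of_le_of_le' tendsto_const_nhds h
        · filter_upwards [eventually_ge_atTop 1] with i hi
          have hai : 1 ≤ a n i := (hG1 n i hn (by omega)).1
          positivity
        · filter_upwards [eventually_ge_atTop 1] with i hi
          have hai : 1 ≤ a n i := (hG1 n i hn (by omega)).1
          have hainv : 0 ≤ (a n i)⁻¹ := by positivity
          have hC : (((i-1).choose s : ℕ):ℝ) ≤ (i:ℝ)^s := by
            have h1 : (i-1).choose s ≤ (i-1)^s := Nat.choose_le_pow _ _
            have h2 : (i-1)^s ≤ i^s := Nat.pow_le_pow_left (by omega) s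
            exact_mod_cast h1.trans h2
          calc (a n i)⁻¹ * (((i-1).choose s : ℕ):ℝ) ≤ (a n i)⁻¹ * (i:ℝ)^s :=
                mul_le_mul_of_nonneg_left hC hainv
            _ = (i:ℝ)^s * (a n i)⁻¹ := mul_comm _ _
      have hcc : Tendsto (fun i : ℕ => (((a n i)⁻¹ * (((i-1).choose s : ℕ):ℝ) : ℝ) : ℂ))
          atTop (nhds 0) := by
        have := (Complex.continuous_ofReal.tendsto 0).comp hre
        simpa [Function.comp_def] using this
      apply hcc.congr
      intro i
      push_cast
      ring
    · have hsum2 : ∀ i : ℕ, 0 < i →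
          (∑ j ∈ Finset.Icc 1 i, (((j-1).choose s : ℕ):ℂ)) =
            (i:ℂ) * (((i-1).choose s : ℕ):ℂ) / ((s:ℂ)+1) := by
        intro i hi
        induction i with
        | zero => omega
        | succ i ih =>
          rcases Nat.eq_zero_or_pos i with rfl | hip
          · simp [Nat.choose_eq_zero_of_lt hs]
          · rw [Finset.sum_Icc_succ_top (by omega : 1 ≤ i + 1), ih hip]
            have hid := aux_id s (i-1)
            have hi1 : (((i-1 : ℕ)):ℂ) + 1 = (i:ℂ) := by
              have hsi : (1:ℕ) ≤ i := hip
              push_cast [Nat.cast_sub hsi]; ring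
            rw [hi1] at hid
            have hi2 : i - 1 + 1 = i := by omega
            rw [hi2] at hid
            simp only [Nat.add_sub_cancel]
            -- hid : ((i:ℂ) - s) * (i.choose s) = (i:ℂ) * ((i-1).choose s)
            field_simp
            push_cast
            linear_combination -hid
      intro i hi
      rw [hsum2 i hi]
      have hi' : ((i:ℂ)) ≠ 0 := Nat.cast_ne_zero.mpr hi.ne'
      field_simp
end

section
/- Fix a real number α with 0 < α < 1 and a strictly increasing sequence (α_n) ⊂ (0,1) with lim_{n→∞} α_n = α. Define a_n(i) := i^{α_n}·e^{i} for positive integers n,i, and v_n(i) := 1/a_n(i). Then: (a) a_n(i) ≤ a_{n+1}(i) and 1 ≤ a_n(i) ≤ a_n(i+1) for all n,i, and lim_{i→∞} a_n(i) = ∞ (conditions (G∞-1) and (I) hold); (b) condition (G∞-2) fails: there are no m > 1 and M > 0 with a_1(i)² ≤ M·a_m(i) for all i; (c) for every m > 1, sup_i i·v_m(i)/v_1(i) = ∞, so condition (N) fails; (d) for every positive integer s and every n, lim_{i→∞} i^s·v_n(i) = 0. (Hence without (G∞-2), condition (4) of the main theorem does not imply (N).) -/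
open Filter

/-- Example: for `0 < α < 1`, a strictly increasing sequence `(α_n) ⊂ (0,1)` with
`α_n → α`, and `a_n(i) := i^{α_n}·e^i` (with `v n i = (a n i)⁻¹`):
(a) (K), (G∞-1) and (I) hold; (b) (G∞-2) fails at `n = 1`;
(c) (N) fails: `sup_i i·v_m(i)/v_1(i) = ∞` for every `m > 1`;
(d) `i^s·v_n(i) → 0` for every positive integer `s` and every `n`. -/
theorem stmt_10 (α : ℝ) (hα0 : 0 < α) (hα1 : α < 1)
    (αs : ℕ → ℝ)
    (hmono : ∀ n, 0 < n → αs n < αs (n + 1))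
    (hrange : ∀ n, 0 < n → 0 < αs n ∧ αs n < 1)
    (hlim : Tendsto αs atTop (nhds α))
    (a : ℕ → ℕ → ℝ)
    (ha : ∀ n i : ℕ, a n i = (i : ℝ) ^ (αs n) * Real.exp i) :
    ((∀ n i, 0 < n → 0 < i →
        a n i ≤ a (n + 1) i ∧ 1 ≤ a n i ∧ a n i ≤ a n (i + 1)) ∧
      (∀ n, 0 < n → Tendsto (fun i => a n i) atTop atTop)) ∧
    (¬ ∃ m, 1 < m ∧ ∃ M : ℝ, 0 < M ∧ ∀ i, 0 < i → (a 1 i) ^ 2 ≤ M * a m i) ∧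
    (∀ m, 1 < m → ∀ C : ℝ, ∃ i : ℕ, 0 < i ∧
      C < (i : ℝ) * (a m i)⁻¹ / (a 1 i)⁻¹) ∧
    (∀ s : ℕ, 0 < s → ∀ n, 0 < n →
      Tendsto (fun i : ℕ => (i : ℝ) ^ s * (a n i)⁻¹) atTop (nhds 0)) := by
  have hexp0 : ∀ x : ℝ, (0:ℝ) < Real.exp x := Real.exp_pos
  have hone : ∀ (n i : ℕ), 0 < n → 1 ≤ i → 1 ≤ (i:ℝ) ^ (αs n) := by
    intro n i hn hi
    have hi1 : (1:ℝ) ≤ i := by exact_mod_cast hi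
    calc (1:ℝ) = (i:ℝ) ^ (0:ℝ) := (Real.rpow_zero _).symm
    _ ≤ (i:ℝ) ^ (αs n) := Real.rpow_le_rpow_of_exponent_le hi1 (hrange n hn).1.le
  refine ⟨⟨?_, ?_⟩, ?_, ?_, ?_⟩
  · intro n i hn hi
    have hi1 : (1:ℝ) ≤ i := by exact_mod_cast hi
    refine ⟨?_, ?_, ?_⟩
    · rw [ha, ha]
      exact mul_le_mul_of_nonneg_right
        (Real.rpow_le_rpow_of_exponent_le hi1 (hmono n hn).le) (Real.exp_pos _).le
    · rw [ha]
      nlinarith [hone n i hn hi, Real.one_le_exp (by positivity : (0:ℝ) ≤ (i:ℝ))]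
    · rw [ha, ha]
      have h1 : ((i:ℝ)) ^ (αs n) ≤ ((i+1:ℕ):ℝ) ^ (αs n) := by
        apply Real.rpow_le_rpow (by positivity) (by push_cast; linarith) (hrange n hn).1.le
      have h2 : Real.exp i ≤ Real.exp ((i+1:ℕ):ℝ) := by
        apply Real.exp_le_exp.2; push_cast; linarith
      nlinarith [hone n i hn hi, Real.exp_pos (i:ℝ), Real.exp_pos ((i+1:ℕ):ℝ)]
  · intro n hn
    refine tendsto_atTop_mono' atTop ?_
      (Real.tendsto_exp_atTop.comp tendsto_natCast_atTop_atTop)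
    filter_upwards [eventually_ge_atTop 1] with i hi
    rw [ha]
    show Real.exp (i:ℝ) ≤ _
    exact le_mul_of_one_le_left (Real.exp_pos _).le (hone n i hn hi)
  · rintro ⟨m, hm, M, hM, hle⟩
    set i : ℕ := max 1 (⌈4*M⌉₊ + 1) with hidef
    have hi1 : 1 ≤ i := le_max_left _ _
    have hile : (4*M : ℝ) ≤ i := by
      have h1 : (4*M:ℝ) ≤ ⌈4*M⌉₊ := Nat.le_ceil _
      have h2 : (⌈4*M⌉₊ : ℝ) ≤ i := by
        have : ⌈4*M⌉₊ + 1 ≤ i := le_max_right _ _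
        exact_mod_cast le_trans (Nat.le_succ _) this
      linarith
    have hx1 : (1:ℝ) ≤ i := by exact_mod_cast hi1
    have hA : 1 ≤ (i:ℝ) ^ (αs 1) := hone 1 i one_pos hi1
    have hB : (i:ℝ) ^ (αs m) ≤ (i:ℝ) := by
      calc (i:ℝ) ^ (αs m) ≤ (i:ℝ) ^ (1:ℝ) :=
        Real.rpow_le_rpow_of_exponent_le hx1 (hrange m (by omega)).2.le
      _ = (i:ℝ) := Real.rpow_one _
    have hE : ((i:ℝ)/2 + 1)^2 ≤ Real.exp i := by
      have h1 : (i:ℝ)/2 + 1 ≤ Real.exp ((i:ℝ)/2) := Real.add_one_le_exp _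
      have h2 : Real.exp ((i:ℝ)/2) * Real.exp ((i:ℝ)/2) = Real.exp i := by
        rw [← Real.exp_add]; ring_nf
      nlinarith [Real.exp_pos ((i:ℝ)/2)]
    have hle' := hle i (by omega)
    rw [ha, ha] at hle'
    have hEp := Real.exp_pos (i:ℝ)
    have hA2 : 1*1 ≤ ((i:ℝ)^(αs 1)) * ((i:ℝ)^(αs 1)) :=
      mul_le_mul hA hA zero_le_one (le_trans zero_le_one hA)
    have e1 : Real.exp (i:ℝ) * Real.exp (i:ℝ) ≤ (M * (i:ℝ)) * Real.exp (i:ℝ) := by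
      nlinarith [mul_le_mul_of_nonneg_right hB hEp.le]
    have e2 : Real.exp (i:ℝ) ≤ M * (i:ℝ) := le_of_mul_le_mul_right e1 hEp
    nlinarith [mul_le_mul_of_nonneg_right hile (by positivity : (0:ℝ) ≤ (i:ℝ))]
  · intro m hm C
    have hε : (0:ℝ) < 1 + αs 1 - αs m := by
      have h1 := (hrange 1 one_pos).1
      have h2 := (hrange m (by omega)).2
      linarith
    have htend : Tendsto (fun i:ℕ => (i:ℝ) ^ (1 + αs 1 - αs m)) atTop atTop :=
      (tendsto_rpow_atTop hε).comp tendsto_natCast_atTop_atTop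
    obtain ⟨i, hi⟩ := ((htend.eventually_gt_atTop C).and (eventually_ge_atTop 1)).exists
    refine ⟨i, by omega, ?_⟩
    have hx : (0:ℝ) < i := by exact_mod_cast Nat.lt_of_lt_of_le Nat.zero_lt_one hi.2
    have heq : (i:ℝ) * (a m i)⁻¹ / (a 1 i)⁻¹ = (i:ℝ) ^ (1 + αs 1 - αs m) := by
      rw [ha, ha, Real.rpow_sub hx, Real.rpow_add hx, Real.rpow_one]
      have h1 : ((i:ℝ)) ^ (αs 1) ≠ 0 := by positivity
      have h2 : ((i:ℝ)) ^ (αs m) ≠ 0 := by positivity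
      have h3 : Real.exp (i:ℝ) ≠ 0 := (Real.exp_pos _).ne'
      field_simp
    rw [heq]
    exact hi.1
  · intro s hs n hn
    have hb : Tendsto (fun i:ℕ => (i:ℝ)^s * Real.exp (-(i:ℝ))) atTop (nhds 0) :=
      (Real.tendsto_pow_mul_exp_neg_atTop_nhds_zero s).comp tendsto_natCast_atTop_atTop
    refine squeeze_zero' ?_ ?_ hb
    · filter_upwards with i
      rw [ha]
      positivity
    · filter_upwards [eventually_ge_atTop 1] with i hi
      rw [ha, Real.exp_neg]
      have h1 := hone n i hn hi
      have hE := Real.exp_pos (i:ℝ)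
      have key : ((i:ℝ)^(αs n) * Real.exp i)⁻¹ ≤ (Real.exp i)⁻¹ := by
        apply inv_anti₀ hE
        nlinarith
      have : (0:ℝ) ≤ (i:ℝ)^s := by positivity
      exact mul_le_mul_of_nonneg_left key this
end

section
/- Fix a positive integer s ≥ 1 and define a_n(i) := i^{s − 1/(1+n)} for positive integers n,i, with v_n(i) := 1/a_n(i). Then: (a) a_n(i) ≤ a_{n+1}(i) and 1 ≤ a_n(i) ≤ a_n(i+1) for all n,i, and lim_{i→∞} a_n(i) = ∞ (conditions (G∞-1) and (I) hold); (b) condition (G∞-2) fails: there are no m > 1 and M > 0 with a_1(i)² ≤ M·a_m(i) for all i; (c) for every n and every integer m with 1 ≤ m ≤ s, lim_{i→∞} i^{m−1}·v_n(i) = 0; (d) for every n, lim_{i→∞} i^{s}·v_n(i) = ∞. (Hence without (G∞-2), the existence of one s with i^s·v_n(i) → 0 does not imply the same for all s.) -/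
open Filter

/-- Example: for a fixed positive integer `s ≥ 1` and `a_n(i) := i^{s − 1/(1+n)}`
(with `v n i = (a n i)⁻¹`):
(a) (K), (G∞-1) and (I) hold; (b) (G∞-2) fails at `n = 1`;
(c) `i^{m−1}·v_n(i) → 0` for every `n` and every `1 ≤ m ≤ s`;
(d) `i^s·v_n(i) → ∞` for every `n`. -/
theorem stmt_11 (s : ℕ) (hs : 1 ≤ s)
    (a : ℕ → ℕ → ℝ)
    (ha : ∀ n i : ℕ, a n i = (i : ℝ) ^ ((s : ℝ) - 1 / (1 + (n : ℝ)))) :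
    ((∀ n i, 0 < n → 0 < i →
        a n i ≤ a (n + 1) i ∧ 1 ≤ a n i ∧ a n i ≤ a n (i + 1)) ∧
      (∀ n, 0 < n → Tendsto (fun i => a n i) atTop atTop)) ∧
    (¬ ∃ m, 1 < m ∧ ∃ M : ℝ, 0 < M ∧ ∀ i, 0 < i → (a 1 i) ^ 2 ≤ M * a m i) ∧
    (∀ n, 0 < n → ∀ m : ℕ, 1 ≤ m → m ≤ s →
      Tendsto (fun i : ℕ => (i : ℝ) ^ (m - 1) * (a n i)⁻¹) atTop (nhds 0)) ∧
    (∀ n, 0 < n →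
      Tendsto (fun i : ℕ => (i : ℝ) ^ s * (a n i)⁻¹) atTop atTop) := by
  have hs1 : (1 : ℝ) ≤ (s : ℝ) := by exact_mod_cast hs
  -- exponent bounds
  have hden : ∀ n : ℕ, (0 : ℝ) < 1 + (n : ℝ) := fun n => by positivity
  have hfrac_le : ∀ n : ℕ, 0 < n → 1 / (1 + (n : ℝ)) ≤ 1 / 2 := by
    intro n hn
    apply one_div_le_one_div_of_le (by norm_num)
    have : (1 : ℝ) ≤ (n : ℝ) := by exact_mod_cast hn
    linarith
  have hfrac_pos : ∀ n : ℕ, (0 : ℝ) < 1 / (1 + (n : ℝ)) := fun n =>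
    div_pos one_pos (hden n)
  have hepos : ∀ n : ℕ, 0 < n → 0 < (s : ℝ) - 1 / (1 + (n : ℝ)) := by
    intro n hn
    have := hfrac_le n hn
    linarith
  have henonneg : ∀ n : ℕ, (0 : ℝ) ≤ (s : ℝ) - 1 / (1 + (n : ℝ)) := by
    intro n
    have h1 : 1 / (1 + (n : ℝ)) ≤ 1 := by
      rw [div_le_one (hden n)]
      have : (0:ℝ) ≤ (n:ℝ) := Nat.cast_nonneg n
      linarith
    linarith
  have hcast : ∀ i : ℕ, 0 < i → (1 : ℝ) ≤ (i : ℝ) := by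
    intro i hi; exact_mod_cast hi
  refine ⟨⟨?_, ?_⟩, ?_, ?_, ?_⟩
  · -- (a) pointwise inequalities
    intro n i hn hi
    have hi1 := hcast i hi
    have hi0 : (0 : ℝ) ≤ (i : ℝ) := by linarith
    refine ⟨?_, ?_, ?_⟩
    · rw [ha, ha]
      apply Real.rpow_le_rpow_of_exponent_le hi1
      have : 1 / (1 + ((n+1 : ℕ) : ℝ)) ≤ 1 / (1 + (n : ℝ)) := by
        apply one_div_le_one_div_of_le (hden n)
        push_cast; linarith
      linarith
    · rw [ha]
      calc (1:ℝ) = (i : ℝ) ^ (0:ℝ) := (Real.rpow_zero _).symm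
        _ ≤ _ := Real.rpow_le_rpow_of_exponent_le hi1 (henonneg n)
    · rw [ha, ha]
      apply Real.rpow_le_rpow hi0 (by push_cast; linarith) (henonneg n)
  · -- (a) tendsto atTop
    intro n hn
    have h := (tendsto_rpow_atTop (hepos n hn)).comp
      (tendsto_natCast_atTop_atTop (R := ℝ))
    refine h.congr fun i => ?_
    rw [ha]; rfl
  · -- (b) G∞-2 fails
    rintro ⟨m, hm, M, hM, h⟩
    set δ : ℝ := (s : ℝ) - 1 + 1 / (1 + (m : ℝ)) with hδ
    have hδpos : 0 < δ := by
      have := hfrac_pos m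
      simp only [hδ]; linarith
    have key : ∀ i : ℕ, 0 < i → (i : ℝ) ^ δ ≤ M := by
      intro i hi
      have hi1 := hcast i hi
      have hipos : (0 : ℝ) < (i : ℝ) := by linarith
      have h2 := h i hi
      rw [ha, ha] at h2
      have e1 : ((i : ℝ) ^ ((s : ℝ) - 1 / (1 + (1:ℕ) : ℝ))) ^ 2
          = (i : ℝ) ^ (((s : ℝ) - 1 / (1 + (m : ℝ))) + δ) := by
        rw [← Real.rpow_natCast ((i:ℝ) ^ _) 2, ← Real.rpow_mul (le_of_lt hipos)]
        congr 1
        have h21 : (1 : ℝ) + ((1:ℕ):ℝ) = 2 := by norm_num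
        rw [h21]
        ring
      rw [e1, Real.rpow_add hipos] at h2
      have hb : (0 : ℝ) < (i : ℝ) ^ ((s : ℝ) - 1 / (1 + (m : ℝ))) :=
        Real.rpow_pos_of_pos hipos _
      rw [mul_comm] at h2
      exact le_of_mul_le_mul_right h2 hb
    have htend : Tendsto (fun i : ℕ => (i : ℝ) ^ δ) atTop atTop :=
      (tendsto_rpow_atTop hδpos).comp tendsto_natCast_atTop_atTop
    obtain ⟨i, hi⟩ := (htend.eventually_gt_atTop M).and (eventually_gt_atTop 0) |>.exists
    exact absurd (key i hi.2) (not_le.mpr hi.1)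
  · -- (c)
    intro n hn m hm1 hms
    have hc : ((m - 1 : ℕ) : ℝ) - ((s : ℝ) - 1 / (1 + (n : ℝ))) < 0 := by
      have h1 : ((m - 1 : ℕ) : ℝ) = (m : ℝ) - 1 := by
        have : (1:ℕ) ≤ m := hm1
        push_cast [Nat.cast_sub this]; ring
      have h2 : (m : ℝ) ≤ (s : ℝ) := by exact_mod_cast hms
      have h3 := hfrac_le n hn
      rw [h1]; linarith
    have htend : Tendsto (fun i : ℕ =>
        (i : ℝ) ^ (((m - 1 : ℕ) : ℝ) - ((s : ℝ) - 1 / (1 + (n : ℝ)))))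
        atTop (nhds 0) :=
      (tendsto_rpow_neg_atTop (by linarith : 0 < -(((m - 1 : ℕ) : ℝ) - ((s : ℝ) - 1 / (1 + (n : ℝ)))))).comp tendsto_natCast_atTop_atTop |>.congr (by intro i; simp)
    refine htend.congr' ?_
    filter_upwards [eventually_gt_atTop 0] with i hi
    have hipos : (0 : ℝ) < (i : ℝ) := by exact_mod_cast hi
    rw [ha, ← Real.rpow_natCast (i:ℝ) (m-1), Real.rpow_sub hipos, div_eq_mul_inv]
  · -- (d)
    intro n hn
    have htend : Tendsto (fun i : ℕ =>
        (i : ℝ) ^ ((s : ℝ) - ((s : ℝ) - 1 / (1 + (n : ℝ))))) atTop atTop :=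
      (tendsto_rpow_atTop (by have := hfrac_pos n; linarith)).comp
        tendsto_natCast_atTop_atTop
    refine htend.congr' ?_
    filter_upwards [eventually_gt_atTop 0] with i hi
    have hipos : (0 : ℝ) < (i : ℝ) := by exact_mod_cast hi
    rw [ha, ← Real.rpow_natCast (i:ℝ) s, Real.rpow_sub hipos, div_eq_mul_inv]
end

section
/- Define a_n(i) := e^{i·n} for positive integers n,i, and v_n(i) := e^{−i·n}. Then: (a) A = (a_n(i)) is a G∞-matrix; (b) (GPC) holds: for every n there exists m > n with ∑_{i=1}^∞ a_n(i)/a_m(i) < ∞ (so k₀(V) is nuclear); (c) condition (U) fails: for every n, sup_i i^i·e^{−i·n} = ∞. (Hence (U) is strictly stronger than nuclearity.) -/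
open Filter

/-- The matrix `a_n(i) = e^{i·n}`. -/
noncomputable def aExp (n i : ℕ) : ℝ := Real.exp ((i : ℝ) * n)

/-- `a_n(i) = e^{i n}` is a G∞-matrix satisfying (GPC) (so `k₀(V)` is nuclear) but failing
(U): `sup_i i^i·e^{−i n} = ∞` for every `n`.  Hence (U) is strictly stronger than
nuclearity. -/
theorem stmt_13 :
    IsGinfMatrix aExp ∧
      (∀ n, 0 < n → ∃ m, n < m ∧ Summable (fun i : ℕ => aExp n (i + 1) / aExp m (i + 1))) ∧
      (∀ n, 0 < n → ∀ C : ℝ, ∃ i : ℕ, 0 < i ∧ C < (i : ℝ) ^ i * (aExp n i)⁻¹) := by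
  refine ⟨⟨?_, ?_, ?_⟩, ?_, ?_⟩
  · intro n i _ _
    unfold aExp
    apply Real.exp_le_exp.2
    have : (0:ℝ) ≤ (i:ℝ) := Nat.cast_nonneg i
    push_cast
    nlinarith
  · intro n i hn hi
    unfold aExp
    constructor
    · rw [← Real.exp_zero]
      apply Real.exp_le_exp.2
      positivity
    · apply Real.exp_le_exp.2
      have : (0:ℝ) ≤ (n:ℝ) := Nat.cast_nonneg n
      push_cast
      nlinarith
  · intro n hn
    refine ⟨2 * n, by omega, 1, one_pos, fun i _ => ?_⟩
    unfold aExp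
    rw [one_mul, ← Real.exp_nat_mul]
    apply le_of_eq
    congr 1
    push_cast
    ring
  · intro n hn
    refine ⟨n + 1, Nat.lt_succ_self n, ?_⟩
    have h : (fun i : ℕ => aExp n (i + 1) / aExp (n + 1) (i + 1))
        = fun i : ℕ => Real.exp (-1) * (Real.exp (-1)) ^ i := by
      funext i
      unfold aExp
      rw [← Real.exp_sub, ← Real.exp_nat_mul, ← Real.exp_add]
      congr 1
      push_cast
      ring
    rw [h]
    exact (summable_geometric_of_lt_one (le_of_lt (Real.exp_pos _))
      (by rw [Real.exp_lt_one_iff]; norm_num)).mul_left _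
  · intro n hn C
    set i : ℕ := ⌈Real.exp n * (|C| + 1)⌉₊ with hi
    have hpos : (0:ℝ) < Real.exp n * (|C| + 1) := by positivity
    have hipos : 0 < i := Nat.ceil_pos.2 hpos
    refine ⟨i, hipos, ?_⟩
    have hle : Real.exp n * (|C| + 1) ≤ (i : ℝ) := Nat.le_ceil _
    have hdiv : (|C| + 1) ≤ (i : ℝ) / Real.exp n := by
      rw [le_div_iff₀ (Real.exp_pos n)]
      linarith [hle]
    have hkey : aExp n i = Real.exp n ^ i := by
      unfold aExp
      rw [← Real.exp_nat_mul]
    rw [hkey, ← div_eq_mul_inv, ← div_pow]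
    calc C ≤ |C| := le_abs_self C
      _ < |C| + 1 := by linarith
      _ ≤ (|C| + 1) ^ i := le_self_pow₀ (by linarith [abs_nonneg C]) hipos.ne'
      _ ≤ ((i : ℝ) / Real.exp n) ^ i := pow_le_pow_left₀ (by positivity) hdiv i
end

section
/- Fix a positive integer s and define the complex sequence u by u_1 := 1 and u_i := ∏_{j=1}^{i−1} (1 − s/j) for i ≥ 2 (so u_i = 0 for every i > s, and u is finitely supported and nonzero). Then for every positive integer i, ∑_{j=i}^{∞} u_j/j = u_i/s. (That is, u is an eigenvector of the transposed Cesàro operator 𝖢′, given by (𝖢′y)_i = ∑_{j≥i} y_j/j, with eigenvalue 1/s; hence 1/s ∈ σ_pt(𝖢′) and so 1/s ∈ σ(𝖢;k₀(V)).) -/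
open Filter

/-- For a fixed positive integer `s`, the finitely supported sequence `u` with `u 1 = 1` and
`u i = ∏_{j=1}^{i−1} (1 − s/j)` for `i ≥ 2` vanishes beyond `s` and satisfies
`∑_{j=i}^∞ u_j/j = u_i/s` for every positive `i`; that is, `u` is an eigenvector of the
transposed Cesàro operator `𝖢′` with eigenvalue `1/s`. -/
theorem stmt_14 (s : ℕ) (hs : 0 < s) (u : ℕ → ℂ)
    (hu1 : u 1 = 1)
    (hu : ∀ i : ℕ, 2 ≤ i → u i = ∏ j ∈ Finset.Icc 1 (i - 1), (1 - (s : ℂ) / (j : ℂ))) :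
    (∀ j : ℕ, s < j → u j = 0) ∧
    (∀ i : ℕ, 0 < i →
      ∑' j : ℕ, (if i ≤ j then u j / (j : ℂ) else 0) = u i / (s : ℂ)) := by
  have hsC : (s : ℂ) ≠ 0 := Nat.cast_ne_zero.mpr hs.ne'
  have h0 : ∀ j : ℕ, s < j → u j = 0 := by
    intro j hj
    have h2 : 2 ≤ j := by omega
    rw [hu j h2]
    apply Finset.prod_eq_zero (i := s)
    · simp only [Finset.mem_Icc]; omega
    · field_simp
      simp
  have hrec : ∀ j : ℕ, 1 ≤ j → u (j + 1) = u j * (1 - (s : ℂ) / (j : ℂ)) := by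
    intro j hj
    rcases eq_or_lt_of_le hj with h | h
    · rw [← h, hu 2 le_rfl]
      simp [hu1]
    · have h2 : 2 ≤ j := h
      rw [hu (j + 1) (by omega), hu j h2]
      have : j + 1 - 1 = (j - 1) + 1 := by omega
      rw [this, Finset.prod_Icc_succ_top (by omega)]
      have h3 : j - 1 + 1 = j := by omega
      rw [h3]
  -- key: u j / j = (u j - u (j+1)) / s for 1 ≤ j
  have hkey : ∀ j : ℕ, 1 ≤ j → u j / (j : ℂ) = (u j - u (j + 1)) / (s : ℂ) := by
    intro j hj
    have hjC : (j : ℂ) ≠ 0 := Nat.cast_ne_zero.mpr (by omega)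
    rw [hrec j hj]
    field_simp
    ring
  refine ⟨h0, fun i hi => ?_⟩
  have hsum : ∑' j : ℕ, (if i ≤ j then u j / (j : ℂ) else 0)
      = ∑ j ∈ Finset.Icc i s, (if i ≤ j then u j / (j : ℂ) else 0) := by
    apply tsum_eq_sum
    intro b hb
    simp only [Finset.mem_Icc, not_and, not_le] at hb
    by_cases hib : i ≤ b
    · simp [hib, h0 b (hb hib)]
    · simp [hib]
  rw [hsum]
  have : ∑ j ∈ Finset.Icc i s, (if i ≤ j then u j / (j : ℂ) else 0)
      = ∑ j ∈ Finset.Icc i s, u j / (j : ℂ) := by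
    apply Finset.sum_congr rfl
    intro j hj
    simp only [Finset.mem_Icc] at hj
    simp [hj.1]
  rw [this]
  by_cases his : i ≤ s
  · have : Finset.Icc i s = Finset.Ico i (s + 1) := by
      rw [Finset.Ico_add_one_right_eq_Icc]
    rw [this, Finset.sum_Ico_eq_sum_range]
    have hsum2 : ∀ k ∈ Finset.range (s + 1 - i), u (i + k) / ((i + k : ℕ) : ℂ)
        = (u (i + k) - u (i + k + 1)) / (s : ℂ) := by
      intro k _
      exact hkey (i + k) (by omega)
    rw [Finset.sum_congr rfl hsum2, ← Finset.sum_div]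
    have := Finset.sum_range_sub' (f := fun k => u (i + k)) (s + 1 - i)
    simp only [← add_assoc] at this
    rw [this]
    have h1 : i + (s + 1 - i) = s + 1 := by omega
    rw [h1, h0 (s + 1) (by omega)]
    ring_nf
  · rw [Finset.Icc_eq_empty (by omega), Finset.sum_empty, h0 i (by omega), zero_div]
end

section
/- Let A = (a_n(i)) be a G∞-matrix satisfying (SN): for every real α and every n there exists m > n with sup_i i^α·v_m(i)/v_n(i) < ∞. Then for every real t ≥ 1/2 and every n there exists m > n such that sup_{i≥2} i^{t−1}·v_m(i)·∑_{j=1}^{i−1} 1/(j^{t}·v_n(j)) < ∞. (This is the key estimate showing equicontinuity of the resolvents (𝖢 − μI)^{−1} of the Cesàro operator on the nuclear co-echelon space k₀(V) for μ away from {0} ∪ {1/m : m ∈ ℕ}.) -/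
open Filter

lemma mono_i (a : ℕ → ℕ → ℝ) (hA : IsGinfMatrix a) (n : ℕ) (hn : 0 < n) :
    ∀ j i : ℕ, 0 < j → j ≤ i → a n j ≤ a n i := by
  intro j i hj hji
  induction i with
  | zero => omega
  | succ k ih =>
    rcases Nat.lt_or_ge j (k+1) with h | h
    · have hk : 0 < k := by omega
      exact (ih (by omega)).trans (hA.2.1 n k hn hk).2
    · have : j = k + 1 := by omega
      simp [this]

/-- For a G∞-matrix satisfying (SN), for every real `t ≥ 1/2` and every `n` there is `m > n`
with `sup_{i≥2} i^{t−1}·v_m(i)·∑_{j=1}^{i−1} 1/(j^t·v_n(j)) < ∞`, where `v n i = (a n i)⁻¹`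
(so `1/(j^t·v_n(j)) = a n j / j^t`).  This is the key resolvent estimate for the Cesàro
operator on the nuclear co-echelon space `k₀(V)`. -/
theorem stmt_15 (a : ℕ → ℕ → ℝ) (hA : IsGinfMatrix a)
    (hSN : ∀ α : ℝ, ∀ n, 0 < n → ∃ m, n < m ∧ ∃ C : ℝ, ∀ i : ℕ, 0 < i →
      (i : ℝ) ^ α * (a m i)⁻¹ / (a n i)⁻¹ ≤ C) :
    ∀ t : ℝ, 1 / 2 ≤ t → ∀ n, 0 < n → ∃ m, n < m ∧ ∃ C : ℝ, ∀ i : ℕ, 2 ≤ i →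
      (i : ℝ) ^ (t - 1) * (a m i)⁻¹ *
        ∑ j ∈ Finset.Icc 1 (i - 1), a n j / (j : ℝ) ^ t ≤ C := by
  intro t ht n hn
  obtain ⟨m, hnm, C, hC⟩ := hSN t n hn
  refine ⟨m, hnm, C, ?_⟩
  intro i hi
  have hipos : (0:ℕ) < i := by omega
  have hm : 0 < m := lt_trans hn hnm
  have hiR : (0:ℝ) < (i:ℝ) := by exact_mod_cast hipos
  have ht0 : (0:ℝ) ≤ t := le_trans (by norm_num) ht
  -- each summand ≤ a n i
  have hsum : ∑ j ∈ Finset.Icc 1 (i - 1), a n j / (j : ℝ) ^ t ≤ (i - 1 : ℕ) * a n i := by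
    have : ∑ j ∈ Finset.Icc 1 (i - 1), a n j / (j : ℝ) ^ t
        ≤ ∑ j ∈ Finset.Icc 1 (i - 1), a n i := by
      apply Finset.sum_le_sum
      intro j hj
      simp only [Finset.mem_Icc] at hj
      have hj1 : 0 < j := hj.1
      have hjR : (1:ℝ) ≤ (j:ℝ) := by exact_mod_cast hj1
      have hjt : (1:ℝ) ≤ (j:ℝ) ^ t := Real.one_le_rpow hjR ht0
      have h1 : a n j / (j:ℝ) ^ t ≤ a n j :=
        div_le_self (le_trans zero_le_one (hA.2.1 n j hn hj1).1) hjt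
      exact h1.trans (mono_i a hA n hn j i hj1 (by omega))
    simpa [Nat.card_Icc, mul_comm] using this
  have hani1 : (1:ℝ) ≤ a n i := (hA.2.1 n i hn hipos).1
  have hami1 : (1:ℝ) ≤ a m i := (hA.2.1 m i hm hipos).1
  have hami0 : (0:ℝ) < a m i := lt_of_lt_of_le one_pos hami1
  have hfac : (0:ℝ) ≤ (i:ℝ) ^ (t - 1) * (a m i)⁻¹ := by positivity
  have key : (i : ℝ) ^ (t - 1) * (a m i)⁻¹ * ∑ j ∈ Finset.Icc 1 (i - 1), a n j / (j : ℝ) ^ t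
      ≤ (i : ℝ) ^ (t - 1) * (a m i)⁻¹ * ((i:ℝ) * a n i) := by
    apply mul_le_mul_of_nonneg_left _ hfac
    refine hsum.trans ?_
    have : ((i - 1 : ℕ) : ℝ) ≤ (i:ℝ) := by
      have : (i - 1 : ℕ) ≤ i := Nat.sub_le i 1
      exact_mod_cast this
    exact mul_le_mul_of_nonneg_right this (le_trans zero_le_one hani1)
  refine key.trans ?_
  have heq : (i : ℝ) ^ (t - 1) * (a m i)⁻¹ * ((i:ℝ) * a n i)
      = (i : ℝ) ^ t * (a m i)⁻¹ / (a n i)⁻¹ := by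
    have h1 : (i:ℝ) ^ (t-1) * (i:ℝ) = (i:ℝ) ^ t := by
      rw [← Real.rpow_add_one (ne_of_gt hiR) (t-1)]; ring_nf
    have hani0 : a n i ≠ 0 := ne_of_gt (lt_of_lt_of_le one_pos hani1)
    field_simp
    nlinarith [h1]
  rw [heq]
  exact hC i hipos
end

section
/- Let A = (a_n(i)) be a G∞-matrix and suppose there exist an index n and a real number β ≥ 1 with sup_i i^β·v_n(i) < ∞. Then (GPC) holds: for every n there exists m > n with ∑_{i=1}^∞ a_n(i)/a_m(i) < ∞, i.e. k₀(V) is nuclear. (Contrapositive: if λ₁(A) is a non-nuclear G∞-space, then sup_i i^β·v_n(i) = ∞ for all n and all β ≥ 1; this is the core of the proof that the open disc D(1) = {λ : |λ − 1/2| < 1/2} is contained in σ(𝖢;k₀(V)) in the non-nuclear case.) -/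
open Filter

/-- If a G∞-matrix admits an index `n` and a real `β ≥ 1` with `sup_i i^β·v_n(i) < ∞`
(where `v n i = (a n i)⁻¹`), then (GPC) holds, i.e. `k₀(V)` is nuclear. -/
theorem stmt_16 (a : ℕ → ℕ → ℝ) (hA : IsGinfMatrix a)
    (h : ∃ n, 0 < n ∧ ∃ β : ℝ, 1 ≤ β ∧ ∃ C : ℝ, ∀ i : ℕ, 0 < i →
      (i : ℝ) ^ β * (a n i)⁻¹ ≤ C) :
    ∀ n, 0 < n → ∃ m, n < m ∧ Summable (fun i : ℕ => a n (i + 1) / a m (i + 1)) := by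
  obtain ⟨hK, hG1, hG2⟩ := hA
  obtain ⟨n₀, hn₀, β, hβ, C, hC⟩ := h
  -- monotonicity in the first index
  have mono : ∀ i, 0 < i → ∀ n n', 0 < n → n ≤ n' → a n i ≤ a n' i := by
    intro i hi n n' hn hle
    induction n' with
    | zero => omega
    | succ k ih =>
      rcases Nat.lt_or_ge n (k + 1) with hlt | hge
      · have hnk : n ≤ k := Nat.lt_succ_iff.mp hlt
        have hk : 0 < k := lt_of_lt_of_le hn hnk
        exact (ih hnk).trans (hK k i hk hi)
      · have : n = k + 1 := le_antisymm hle hge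
        simp [this]
  intro n hn
  set N := max n n₀ with hNdef
  have hNpos : 0 < N := lt_of_lt_of_le hn (le_max_left _ _)
  obtain ⟨m, hNm, M, hM, hMle⟩ := hG2 N hNpos
  have hmpos : 0 < m := hNpos.trans hNm
  obtain ⟨m', hmm', M', hM', hM'le⟩ := hG2 m hmpos
  have hm'pos : 0 < m' := hmpos.trans hmm'
  have hnm' : n < m' := lt_trans (lt_of_le_of_lt (le_max_left n n₀) hNm) hmm'
  -- positivity of C
  have hCpos : 0 < C := by
    have h1 := hC 1 one_pos
    have ha1 : 1 ≤ a n₀ 1 := (hG1 n₀ 1 hn₀ one_pos).1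
    have : (0:ℝ) < (1:ℝ) ^ β * (a n₀ 1)⁻¹ := by positivity
    linarith
  refine ⟨m', hnm', ?_⟩
  set K : ℝ := M' * M * C ^ 2 with hKdef
  have key : ∀ i : ℕ, a n (i + 1) / a m' (i + 1) ≤ K / ((i : ℝ) + 1) ^ 2 := by
    intro i
    set j := i + 1 with hjdef
    have hj : 0 < j := Nat.succ_pos i
    have hjR : (0:ℝ) < (j : ℝ) := by exact_mod_cast hj
    have han : 1 ≤ a n j := (hG1 n j hn hj).1
    have han₀ : 1 ≤ a n₀ j := (hG1 n₀ j hn₀ hj).1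
    have haN : 1 ≤ a N j := (hG1 N j hNpos hj).1
    have ham : 1 ≤ a m j := (hG1 m j hmpos hj).1
    have ham' : 1 ≤ a m' j := (hG1 m' j hm'pos hj).1
    -- j ≤ C * a n₀ j
    have hjβ : (j : ℝ) ≤ (j : ℝ) ^ β := by
      calc (j : ℝ) = (j : ℝ) ^ (1 : ℝ) := (Real.rpow_one _).symm
        _ ≤ (j : ℝ) ^ β := Real.rpow_le_rpow_of_exponent_le (by exact_mod_cast hj) hβ
    have hjC : (j : ℝ) ≤ C * a n₀ j := by
      have h1 := hC j hj
      have h2 : (j : ℝ) ^ β ≤ C * a n₀ j := by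
        have ha0 : (0:ℝ) < a n₀ j := by linarith
        rw [← div_le_iff₀ ha0] at *
        calc (j:ℝ)^β / a n₀ j = (j:ℝ)^β * (a n₀ j)⁻¹ := by ring
          _ ≤ C := h1
      linarith
    have h2 : a n₀ j ≤ a N j := mono j hj n₀ N hn₀ (le_max_right _ _)
    have h3 : a N j ^ 2 ≤ M * a m j := hMle j hj
    have h4 : a m j ^ 2 ≤ M' * a m' j := hM'le j hj
    have h5 : a n j ≤ a m j := mono j hj n m hn (le_of_lt (lt_of_le_of_lt (le_max_left n n₀) hNm))
    -- reduce division
    have ham'pos : (0:ℝ) < a m' j := by linarith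
    have hcast : ((i : ℝ) + 1) = (j : ℝ) := by push_cast [hjdef]; ring
    rw [hcast, div_le_div_iff₀ ham'pos (by positivity)]
    -- a n j * j^2 ≤ K * a m' j
    have s1 : (j:ℝ) ^ 2 ≤ (C * a n₀ j) ^ 2 := by nlinarith
    have s2 : a n₀ j ^ 2 ≤ a N j ^ 2 := by nlinarith
    have s3 : (j:ℝ) ^ 2 ≤ C ^ 2 * (M * a m j) := by nlinarith
    have s4 : a n j * (j:ℝ) ^ 2 ≤ a m j * (C ^ 2 * (M * a m j)) := by
      apply mul_le_mul h5 s3 (by positivity) (by linarith)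
    calc a n j * (j:ℝ) ^ 2 ≤ a m j * (C ^ 2 * (M * a m j)) := s4
      _ = C ^ 2 * M * a m j ^ 2 := by ring
      _ ≤ C ^ 2 * M * (M' * a m' j) := by
          apply mul_le_mul_of_nonneg_left h4 (by positivity)
      _ = K * a m' j := by rw [hKdef]; ring
  have hsum : Summable (fun i : ℕ => K / ((i : ℝ) + 1) ^ 2) := by
    have base : Summable (fun i : ℕ => 1 / ((i : ℝ)) ^ 2) :=
      Real.summable_one_div_nat_pow.mpr one_lt_two
    have shifted : Summable (fun i : ℕ => 1 / ((i : ℝ) + 1) ^ 2) := by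
      have := (summable_nat_add_iff 1).mpr base
      simpa [Nat.cast_add] using this
    simpa [div_eq_mul_inv, one_div] using shifted.mul_left K
  apply Summable.of_nonneg_of_le _ key hsum
  intro i
  have hj : 0 < i + 1 := Nat.succ_pos i
  have := (hG1 n (i + 1) hn hj).1
  have := (hG1 m' (i + 1) hm'pos hj).1
  positivity
end

section
/- Let A = (a_n(i)) be a matrix of reals with a_n(i) ≤ a_{n+1}(i) for all n,i, satisfying (G∞-1): 1 ≤ a_n(i) ≤ a_n(i+1) for all n,i, and suppose condition (L) fails, i.e. for every n one has sup_{i≥2} (log i)·v_n(i) = ∞. Then for every n and every m, sup_{i≥2} v_m(i)·∑_{j=1}^{i−1} 1/(j·v_n(j)) = ∞. (This shows that every boundary point λ ∉ {0,1} of the disc D(1) = {λ : |λ−1/2| < 1/2} lies in σ(𝖢;k₀(V)), so that σ(𝖢;k₀(V)) equals the closed disc in the non-nuclear case without (L).) -/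
open Filter

lemma harmonic_log_le (k : ℕ) :
    Real.log (k + 1) ≤ ∑ j ∈ Finset.Icc 1 k, (1 : ℝ) / j := by
  induction k with
  | zero => simp
  | succ k ih =>
    rw [Finset.sum_Icc_succ_top (by omega : 1 ≤ k + 1)]
    have hpos : (0 : ℝ) < k + 1 := by positivity
    have h1 : Real.log ((k + 1 + 1) / (k + 1)) ≤ (k + 1 + 1) / (k + 1) - 1 :=
      Real.log_le_sub_one_of_pos (by positivity)
    have h2 : ((k:ℝ) + 1 + 1) / (k + 1) - 1 = 1 / (k + 1) := by
      field_simp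
      ring
    rw [Real.log_div (by positivity) (by positivity)] at h1
    push_cast
    push_cast at ih
    linarith [h1, h2, ih]

/-- For a matrix satisfying (K) and (G∞-1) for which (L) fails
(`sup_{i≥2} (log i)·v_n(i) = ∞` for every `n`), one has, for every `n` and `m`,
`sup_{i≥2} v_m(i)·∑_{j=1}^{i−1} 1/(j·v_n(j)) = ∞`, where `v n i = (a n i)⁻¹`
(so `1/(j·v_n(j)) = a n j / j`). -/
theorem stmt_18 (a : ℕ → ℕ → ℝ)
    (hK : ∀ n i, 0 < n → 0 < i → a n i ≤ a (n + 1) i)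
    (hG1 : ∀ n i, 0 < n → 0 < i → 1 ≤ a n i ∧ a n i ≤ a n (i + 1))
    (hnotL : ∀ n, 0 < n → ∀ C : ℝ, ∃ i : ℕ, 2 ≤ i ∧ C < Real.log i * (a n i)⁻¹) :
    ∀ n m, 0 < n → 0 < m → ∀ C : ℝ, ∃ i : ℕ, 2 ≤ i ∧
      C < (a m i)⁻¹ * ∑ j ∈ Finset.Icc 1 (i - 1), a n j / (j : ℝ) := by
  intro n m hn hm C
  obtain ⟨i, hi2, hC⟩ := hnotL m hm C
  refine ⟨i, hi2, ?_⟩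
  have hainv : (0 : ℝ) < (a m i)⁻¹ := by
    have := (hG1 m i hm (by omega)).1
    exact inv_pos.mpr (by linarith)
  have hlog : Real.log i ≤ ∑ j ∈ Finset.Icc 1 (i - 1), a n j / (j : ℝ) := by
    have h1 : Real.log i ≤ ∑ j ∈ Finset.Icc 1 (i - 1), (1 : ℝ) / j := by
      have := harmonic_log_le (i - 1)
      have hi : ((i : ℕ) : ℝ) = ((i - 1 : ℕ) : ℝ) + 1 := by
        have : i - 1 + 1 = i := by omega
        rw [← this]; push_cast; ring
      rw [hi]; exact this
    refine h1.trans (Finset.sum_le_sum fun j hj => ?_)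
    simp only [Finset.mem_Icc] at hj
    have hjpos : (0 : ℝ) < j := by exact_mod_cast hj.1
    have : (1 : ℝ) ≤ a n j := (hG1 n j hn (by omega)).1
    gcongr
  calc C < Real.log i * (a m i)⁻¹ := hC
    _ = (a m i)⁻¹ * Real.log i := mul_comm _ _
    _ ≤ (a m i)⁻¹ * ∑ j ∈ Finset.Icc 1 (i - 1), a n j / (j : ℝ) :=
        mul_le_mul_of_nonneg_left hlog hainv.le
end

section
/- Define a_n(i) := (log(i+26))^n for positive integers n,i, and v_n(i) := 1/a_n(i). Then: (a) A = (a_n(i)) is a G∞-matrix; (b) condition (S) holds: for every n there exists m > n with lim_{i→∞} a_n(i)/a_m(i) = 0; (c) condition (GPC) fails: for every n and every m > n, ∑_{i=1}^∞ a_n(i)/a_m(i) = ∞ (so the space is not nuclear); (d) condition (L) holds: there exists n with sup_i (log i)·v_n(i) < ∞. (Hence (L) is not a nuclearity criterion for k₀(V).) -/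
open Filter

/-- The matrix `a_n(i) = (log(i+26))^n`. -/
noncomputable def aLog (n i : ℕ) : ℝ := Real.log ((i : ℝ) + 26) ^ n

lemma one_le_L (i : ℕ) : (1:ℝ) ≤ Real.log ((i:ℝ) + 26) := by
  rw [Real.le_log_iff_exp_le (by positivity)]
  calc Real.exp 1 ≤ 2.7182818286 := Real.exp_one_lt_d9.le
    _ ≤ (i:ℝ)+26 := by have : (0:ℝ) ≤ i := Nat.cast_nonneg i; linarith

lemma L_pos (i : ℕ) : (0:ℝ) < Real.log ((i:ℝ) + 26) := lt_of_lt_of_le one_pos (one_le_L i)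

lemma tendsto_L : Tendsto (fun i : ℕ => Real.log ((i:ℝ) + 26)) atTop atTop := by
  apply Real.tendsto_log_atTop.comp
  apply tendsto_atTop_add_const_right
  exact tendsto_natCast_atTop_atTop

/-- `a_n(i) = (log(i+26))^n` is a G∞-matrix which satisfies (S) and (L) but fails (GPC);
hence (L) is not a nuclearity criterion for `k₀(V)`.  Here `v n i = (a n i)⁻¹`. -/
theorem stmt_19 :
    IsGinfMatrix aLog ∧
      (∀ n, 0 < n → ∃ m, n < m ∧ Tendsto (fun i => aLog n i / aLog m i) atTop (nhds 0)) ∧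
      (∀ n m, 0 < n → n < m → ¬ Summable (fun i : ℕ => aLog n (i + 1) / aLog m (i + 1))) ∧
      (∃ n, 0 < n ∧ ∃ C : ℝ, ∀ i : ℕ, 0 < i → Real.log i * (aLog n i)⁻¹ ≤ C) := by
  refine ⟨⟨?_, ?_, ?_⟩, ?_, ?_, ?_⟩
  · -- (K)
    intro n i _ _
    exact pow_le_pow_right₀ (one_le_L i) (Nat.le_succ n)
  · -- (G∞-1)
    intro n i _ _
    refine ⟨one_le_pow₀ (one_le_L i), ?_⟩
    apply pow_le_pow_left₀ (le_of_lt (L_pos i))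
    apply Real.log_le_log (by positivity)
    push_cast; linarith
  · -- (G∞-2)
    intro n hn
    refine ⟨2 * n, by omega, 1, one_pos, fun i _ => ?_⟩
    rw [one_mul, aLog, aLog, ← pow_mul, mul_comm]
  · -- (S)
    intro n hn
    refine ⟨n + 1, Nat.lt_succ_self n, ?_⟩
    have : (fun i : ℕ => aLog n i / aLog (n+1) i) = fun i : ℕ => (Real.log ((i:ℝ)+26))⁻¹ := by
      funext i
      rw [aLog, aLog, pow_succ]
      rw [div_mul_eq_div_div, div_self (pow_ne_zero n (L_pos i).ne'), one_div]
    rw [this]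
    exact tendsto_L.inv_tendsto_atTop
  · -- (GPC) fails
    intro n m hn hnm hs
    set k := m - n with hk
    have hm : m = n + k := by omega
    have hk1 : 1 ≤ k := by omega
    have heq : ∀ i : ℕ, aLog n (i+1) / aLog m (i+1) = (Real.log ((i:ℝ)+27) ^ k)⁻¹ := by
      intro i
      have hc : ((i+1 : ℕ):ℝ) + 26 = (i:ℝ) + 27 := by push_cast; ring
      have hL27 : (0:ℝ) < Real.log ((i:ℝ)+27) := by
        have := L_pos (i+1); rwa [hc] at this
      rw [aLog, aLog, hc, hm, pow_add, div_mul_eq_div_div,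
        div_self (pow_ne_zero n hL27.ne'), one_div]
    -- compare with 1/(i+27)
    have hbig : ∀ᶠ i : ℕ in atTop, Real.log ((i:ℝ)+27) ^ k ≤ (i:ℝ) + 27 := by
      have h0 : Tendsto (fun x : ℝ => Real.log x ^ k / (1 * x + 0)) atTop (nhds 0) :=
        Real.tendsto_pow_log_div_mul_add_atTop 1 0 k one_ne_zero
      have h1 : Tendsto (fun i : ℕ => (i:ℝ) + 27) atTop atTop :=
        tendsto_atTop_add_const_right _ _ tendsto_natCast_atTop_atTop
      have h2 := (h0.comp h1).eventually (eventually_le_nhds (show (0:ℝ) < 1 by norm_num))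
      filter_upwards [h2, eventually_ge_atTop 0] with i h3 _
      simp only [Function.comp, one_mul, add_zero] at h3
      have hpos : (0:ℝ) < (i:ℝ) + 27 := by positivity
      rw [div_le_one hpos] at h3
      linarith [h3]
    have hO : (fun i : ℕ => ((i:ℝ)+27)⁻¹) =O[atTop]
        (fun i : ℕ => aLog n (i+1) / aLog m (i+1)) := by
      apply Asymptotics.IsBigO.of_bound 1
      filter_upwards [hbig] with i h
      have hp1 : (0:ℝ) < (i:ℝ) + 27 := by positivity
      have hLp : (0:ℝ) < Real.log ((i:ℝ)+27) ^ k := by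
        have : (0:ℝ) < Real.log ((i:ℝ)+27) := by
          have := L_pos (i+1); rwa [show ((i+1:ℕ):ℝ) + 26 = (i:ℝ)+27 by push_cast; ring] at this
        positivity
      rw [heq i, one_mul, Real.norm_eq_abs, Real.norm_eq_abs, abs_of_pos (by positivity),
        abs_of_pos (by positivity)]
      exact inv_anti₀ hLp h
    have hsum : Summable (fun i : ℕ => ((i:ℝ)+27)⁻¹) := summable_of_isBigO_nat hs hO
    have : Summable (fun i : ℕ => ((i:ℝ))⁻¹) := by
      rw [← summable_nat_add_iff 27]
      convert hsum using 2 with i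
      · rfl
      push_cast; ring
    exact Real.not_summable_natCast_inv this
  · -- (L)
    refine ⟨1, one_pos, 1, fun i hi => ?_⟩
    rw [aLog, pow_one]
    rw [← div_eq_mul_inv, div_le_one (L_pos i)]
    apply Real.log_le_log (by exact_mod_cast hi)
    linarith [Nat.cast_nonneg (α := ℝ) i]
end
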